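/- For any K ≥ 1, any loss vector L : {1,...,K} → ℝ and any nonnegative weights w assigning a real number w(S) ≥ 0 to each nonempty subset S ⊆ {1,...,K}, the minimum over all policies π (functions assigning to each nonempty subset S an element π(S) ∈ S) of Σ_S w(S)·L(π(S)) equals the minimum over all orderings σ (permutations of {1,...,K}) of Σ_S w(S)·L(σ(S)). Consequently, for an oblivious adversarial loss sequence and i.i.d. availability sets, the maximal policy regret equals the maximal ordering regret. -/

import Mathlib

/-!
Order the arms by increasing loss (`Tuple.sort L`). The induced policy then picks, in every
available set `S`, an arm of minimal loss in `S`, so with nonnegative weights it minimizes every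
summand simultaneously. It is both a policy and an ordering policy, hence its value is the least
element of both sets.
-/

open scoped Classical

/-- The best available arm in `S` according to the ordering `σ` (the element of `S`
with the smallest `σ`-rank), defined for all subsets using a default value when `S = ∅`. -/
noncomputable def selPerm {K : ℕ} (hK : 0 < K) (σ : Equiv.Perm (Fin K))
    (S : Finset (Fin K)) : Fin K :=
  if h : S.Nonempty then σ ((S.image σ.symm).min' (h.image σ.symm)) else ⟨0, hK⟩

section

variable {K : ℕ} (hK : 0 < K)

lemma selPerm_mem (σ : Equiv.Perm (Fin K)) {S : Finset (Fin K)} (hS : S.Nonempty) :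
    selPerm hK σ S ∈ S := by
  rw [selPerm, dif_pos hS]
  obtain ⟨a, ha, hσa⟩ := Finset.mem_image.mp ((S.image σ.symm).min'_mem (hS.image σ.symm))
  simpa [← hσa] using ha

lemma selPerm_le_of_monotone {α : Type*} [Preorder α] {L : Fin K → α}
    {σ : Equiv.Perm (Fin K)} (hσ : Monotone (L ∘ σ)) {S : Finset (Fin K)} {k : Fin K}
    (hk : k ∈ S) : L (selPerm hK σ S) ≤ L k := by
  rw [selPerm, dif_pos ⟨k, hk⟩]
  simpa using hσ (Finset.min'_le _ _ (Finset.mem_image_of_mem σ.symm hk))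

lemma sum_mul_selPerm_sort_le (L : Fin K → ℝ) {w : Finset (Fin K) → ℝ}
    {s : Finset (Finset (Fin K))} (hw : ∀ S ∈ s, 0 ≤ w S) {π : Finset (Fin K) → Fin K}
    (hπ : ∀ S ∈ s, π S ∈ S) :
    ∑ S ∈ s, w S * L (selPerm hK (Tuple.sort L) S) ≤ ∑ S ∈ s, w S * L (π S) :=
  Finset.sum_le_sum fun S hS =>
    mul_le_mul_of_nonneg_left
      (selPerm_le_of_monotone hK (Tuple.monotone_sort L) (hπ S hS)) (hw S hS)

end

/-- **Equivalence of policy and ordering regret for oblivious adversarial losses and i.i.d.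
availabilities:** for any cumulative loss vector `L` and any nonnegative weights `w` on the
nonempty subsets, the minimum over policies `π` of `Σ_S w(S)·L(π(S))` and the minimum over
orderings `σ` of `Σ_S w(S)·L(σ(S))` both exist and coincide.  Hence the maximal policy
regret equals the maximal ordering regret. -/
theorem min_policy_eq_min_ordering_weighted
    (K : ℕ) (hK : 0 < K) (L : Fin K → ℝ)
    (w : Finset (Fin K) → ℝ) (hw : ∀ S, 0 ≤ w S) :
    ∃ m : ℝ,
      IsLeast {x : ℝ | ∃ π : Finset (Fin K) → Fin K,
          (∀ A : Finset (Fin K), A.Nonempty → π A ∈ A) ∧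
          x = ∑ S ∈ Finset.univ.filter (fun S : Finset (Fin K) => S.Nonempty),
                w S * L (π S)} m ∧
      IsLeast {x : ℝ | ∃ σ : Equiv.Perm (Fin K),
          x = ∑ S ∈ Finset.univ.filter (fun S : Finset (Fin K) => S.Nonempty),
                w S * L (selPerm hK σ S)} m := by
  have sorted_le : ∀ π : Finset (Fin K) → Fin K, (∀ A, A.Nonempty → π A ∈ A) →
      ∑ S ∈ Finset.univ.filter (fun S : Finset (Fin K) => S.Nonempty),
          w S * L (selPerm hK (Tuple.sort L) S) ≤
        ∑ S ∈ Finset.univ.filter (fun S : Finset (Fin K) => S.Nonempty), w S * L (π S) :=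
    fun π hπ => sum_mul_selPerm_sort_le hK L (fun S _ => hw S)
      (fun S hS => hπ S (Finset.mem_filter.mp hS).2)
  refine ⟨_, ⟨⟨_, fun A hA => selPerm_mem hK (Tuple.sort L) hA, rfl⟩, ?_⟩, ⟨_, rfl⟩, ?_⟩
  · rintro x ⟨π, hπ, rfl⟩
    exact sorted_le π hπ
  · rintro x ⟨σ, rfl⟩
    exact sorted_le _ fun A hA => selPerm_mem hK σ hA
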